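/- arXiv:2107.10066 — 3 statements merged into one kernel-verified Lean document; each statement's English description precedes it below -/
import Mathlib

section
/- For real symmetric N×N matrices A and B, each pair of correspondingly ordered eigenvalues satisfies |λᵢ(A) - λᵢ(B)| ≤ ||A - B||_F, where eigenvalues are listed in decreasing order and ||·||_F is the Frobenius norm. -/
/-!
For the `i`-th eigenvalues in decreasing order, the span of the first `i + 1` eigenvectors of `A`
and the span of the last `N - i` eigenvectors of `B` have dimensions adding up to `N + 1`, so they
share a unit vector `x`. On it `λᵢ(A) ≤ ⟪x, A x⟫` and `⟪x, B x⟫ ≤ λᵢ(B)`, hence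
`λᵢ(A) - λᵢ(B) ≤ ⟪x, (A - B) x⟫ ≤ ‖A - B‖_F`; exchanging `A` and `B` gives the other sign.
-/

open Matrix Module Submodule InnerProductSpace

section Eigenbasis

variable {E ι : Type*} [NormedAddCommGroup E] [InnerProductSpace ℝ E] [Fintype ι]

theorem OrthonormalBasis.inner_eq_zero_of_mem_span_image (v : OrthonormalBasis ι ℝ E)
    {s : Set ι} {x : E} (hx : x ∈ span ℝ (v '' s)) {j : ι} (hj : j ∉ s) :
    ⟪v j, x⟫_ℝ = 0 := by
  rw [← v.coe_toBasis, Basis.mem_span_image] at hx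
  by_contra h
  exact hj (hx (by simpa [v.coe_toBasis_repr_apply, v.repr_apply_apply] using h))

theorem OrthonormalBasis.finrank_span_image (v : OrthonormalBasis ι ℝ E) (s : Finset ι) :
    finrank ℝ (span ℝ (v '' s)) = s.card := by
  rw [Set.image_eq_range]
  exact (finrank_span_eq_card (v.orthonormal.linearIndependent.comp _ Subtype.val_injective)).trans
    (Fintype.card_coe s)

variable {T : E →ₗ[ℝ] E} {v : OrthonormalBasis ι ℝ E} {μ : ι → ℝ}

theorem inner_apply_self_eq_sum_of_eigenbasis (hv : ∀ j, T (v j) = μ j • v j) (x : E) :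
    ⟪x, T x⟫_ℝ = ∑ j, μ j * ⟪v j, x⟫_ℝ ^ 2 := by
  have hTx : T x = ∑ j, (μ j * ⟪v j, x⟫_ℝ) • v j := by
    conv_lhs => rw [← v.sum_repr' x]
    simp only [map_sum, map_smul, hv, smul_smul, mul_comm]
  rw [hTx, inner_sum]
  refine Finset.sum_congr rfl fun j _ => ?_
  rw [real_inner_smul_right, real_inner_comm]
  ring

theorem mul_norm_sq_le_inner_apply_self_of_mem_span (hv : ∀ j, T (v j) = μ j • v j)
    {s : Set ι} {c : ℝ} (hc : ∀ j ∈ s, c ≤ μ j) {x : E} (hx : x ∈ span ℝ (v '' s)) :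
    c * ‖x‖ ^ 2 ≤ ⟪x, T x⟫_ℝ := by
  rw [inner_apply_self_eq_sum_of_eigenbasis hv, ← v.sum_sq_inner_right x, Finset.mul_sum]
  refine Finset.sum_le_sum fun j _ => ?_
  by_cases hj : j ∈ s
  · exact mul_le_mul_of_nonneg_right (hc j hj) (sq_nonneg _)
  · simp [v.inner_eq_zero_of_mem_span_image hx hj]

theorem inner_apply_self_le_mul_norm_sq_of_mem_span (hv : ∀ j, T (v j) = μ j • v j)
    {s : Set ι} {c : ℝ} (hc : ∀ j ∈ s, μ j ≤ c) {x : E} (hx : x ∈ span ℝ (v '' s)) :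
    ⟪x, T x⟫_ℝ ≤ c * ‖x‖ ^ 2 := by
  have hv' : ∀ j, (-T) (v j) = (-μ) j • v j := fun j => by simp [hv]
  have := mul_norm_sq_le_inner_apply_self_of_mem_span hv' (c := -c)
    (fun j hj => by simpa using hc j hj) hx
  simp only [LinearMap.neg_apply, inner_neg_right] at this
  linarith

end Eigenbasis

section Weyl

variable {E : Type*} [NormedAddCommGroup E] [InnerProductSpace ℝ E]

theorem Submodule.exists_ne_zero_mem_mem_of_finrank_lt_add [FiniteDimensional ℝ E]
    {P Q : Submodule ℝ E}
    (h : finrank ℝ E < finrank ℝ P + finrank ℝ Q) : ∃ x ∈ P, x ∈ Q ∧ x ≠ 0 := by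
  have hPQ : ¬Disjoint P Q := fun hd => (finrank_add_finrank_le_of_disjoint hd).not_gt h
  simpa [disjoint_def] using hPQ

theorem sub_le_of_inner_sub_apply_self_le {n : ℕ} {S T : E →ₗ[ℝ] E}
    {v w : OrthonormalBasis (Fin n) ℝ E} {μ ν : Fin n → ℝ}
    (hv : ∀ j, S (v j) = μ j • v j) (hw : ∀ j, T (w j) = ν j • w j)
    (hμ : Antitone μ) (hν : Antitone ν) {c : ℝ}
    (hc : ∀ x, ⟪x, (S - T) x⟫_ℝ ≤ c * ‖x‖ ^ 2) (i : Fin n) :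
    μ i - ν i ≤ c := by
  have : FiniteDimensional ℝ E := .of_basis v.toBasis
  obtain ⟨x, hxv, hxw, hx0⟩ := Submodule.exists_ne_zero_mem_mem_of_finrank_lt_add
    (P := span ℝ (v '' ↑(Finset.Iic i))) (Q := span ℝ (w '' ↑(Finset.Ici i))) (by
      rw [v.finrank_span_image, w.finrank_span_image, finrank_eq_card_basis v.toBasis,
        Fintype.card_fin, Fin.card_Iic, Fin.card_Ici]
      omega)
  have hS := mul_norm_sq_le_inner_apply_self_of_mem_span hv
    (fun j hj => hμ (Finset.mem_Iic.1 hj)) hxv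
  have hT := inner_apply_self_le_mul_norm_sq_of_mem_span hw
    (fun j hj => hν (Finset.mem_Ici.1 hj)) hxw
  have hST := hc x
  rw [LinearMap.sub_apply, inner_sub_right] at hST
  have hx : 0 < ‖x‖ ^ 2 := by positivity
  nlinarith

end Weyl

namespace Matrix

theorem IsHermitian.toEuclideanLin_eigenvectorBasis {n 𝕜 : Type*} [Fintype n] [DecidableEq n]
    [RCLike 𝕜] {A : Matrix n n 𝕜} (hA : A.IsHermitian) (j : n) :
    toEuclideanLin A (hA.eigenvectorBasis j) = hA.eigenvalues j • hA.eigenvectorBasis j := by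
  apply WithLp.ofLp_injective
  simpa [toLpLin_apply] using hA.mulVec_eigenvectorBasis j

section Frobenius

attribute [local instance] frobeniusSeminormedAddCommGroup

variable {m n : Type*} [Fintype m] [Fintype n]

theorem frobenius_norm_eq_sqrt_sum_sq (M : Matrix m n ℝ) :
    ‖M‖ = √(∑ i, ∑ j, M i j ^ 2) := by
  simp only [frobenius_norm_def, Real.sqrt_eq_rpow, Real.rpow_two, Real.norm_eq_abs, sq_abs]

variable [DecidableEq n] {𝕜 : Type*} [RCLike 𝕜]

theorem frobenius_norm_toEuclideanLin_le (M : Matrix m n 𝕜) (x : EuclideanSpace 𝕜 n) :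
    ‖toEuclideanLin M x‖ ≤ ‖M‖ * ‖x‖ := by
  -- `M *ᵥ x` is the single column of `M * replicateCol Unit x`
  have h := frobenius_norm_mul M (replicateCol Unit (WithLp.ofLp x))
  rwa [← replicateCol_mulVec, frobenius_norm_replicateCol, frobenius_norm_replicateCol,
    WithLp.toLp_ofLp, ← toLpLin_apply] at h

theorem real_inner_toEuclideanLin_self_le (M : Matrix n n ℝ) (x : EuclideanSpace ℝ n) :
    ⟪x, toEuclideanLin M x⟫_ℝ ≤ ‖M‖ * ‖x‖ ^ 2 :=
  calc ⟪x, toEuclideanLin M x⟫_ℝ ≤ ‖x‖ * ‖toEuclideanLin M x‖ := real_inner_le_norm _ _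
    _ ≤ ‖x‖ * (‖M‖ * ‖x‖) := by gcongr; exact frobenius_norm_toEuclideanLin_le M x
    _ = ‖M‖ * ‖x‖ ^ 2 := by ring

theorem IsHermitian.eigenvalues_sub_le_frobenius_norm_sub {N : ℕ}
    {A B : Matrix (Fin N) (Fin N) ℝ} (hA : A.IsHermitian) (hB : B.IsHermitian)
    {σA σB : Equiv.Perm (Fin N)} (hσA : Antitone (hA.eigenvalues ∘ σA))
    (hσB : Antitone (hB.eigenvalues ∘ σB)) (i : Fin N) :
    hA.eigenvalues (σA i) - hB.eigenvalues (σB i) ≤ ‖A - B‖ :=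
  sub_le_of_inner_sub_apply_self_le (v := hA.eigenvectorBasis.reindex σA.symm)
    (w := hB.eigenvectorBasis.reindex σB.symm)
    (fun j => by simpa using hA.toEuclideanLin_eigenvectorBasis (σA j))
    (fun j => by simpa using hB.toEuclideanLin_eigenvectorBasis (σB j)) hσA hσB
    (fun x => by simpa using real_inner_toEuclideanLin_self_le (A - B) x) i

theorem IsHermitian.abs_eigenvalues_sub_le_frobenius_norm_sub {N : ℕ}
    {A B : Matrix (Fin N) (Fin N) ℝ} (hA : A.IsHermitian) (hB : B.IsHermitian)
    {σA σB : Equiv.Perm (Fin N)} (hσA : Antitone (hA.eigenvalues ∘ σA))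
    (hσB : Antitone (hB.eigenvalues ∘ σB)) (i : Fin N) :
    |hA.eigenvalues (σA i) - hB.eigenvalues (σB i)| ≤ ‖A - B‖ :=
  abs_sub_le_iff.2 ⟨hA.eigenvalues_sub_le_frobenius_norm_sub hB hσA hσB i,
    norm_sub_rev A B ▸ hB.eigenvalues_sub_le_frobenius_norm_sub hA hσB hσA i⟩

end Frobenius

end Matrix

/-- Weyl-type perturbation bound: for real symmetric `N×N` matrices `A` and `B` with
eigenvalues listed in decreasing order, `|λᵢ(A) - λᵢ(B)| ≤ ‖A - B‖_F` for each `i`. -/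
theorem eigenvalue_perturbation_frobenius {N : ℕ}
    (A B : Matrix (Fin N) (Fin N) ℝ) (hA : A.IsHermitian) (hB : B.IsHermitian)
    (σA σB : Equiv.Perm (Fin N))
    (hσA : Antitone (hA.eigenvalues ∘ σA))
    (hσB : Antitone (hB.eigenvalues ∘ σB)) :
    ∀ i, |hA.eigenvalues (σA i) - hB.eigenvalues (σB i)| ≤
      Real.sqrt (∑ k, ∑ l, ((A - B) k l) ^ 2) := by
  intro i
  have h := hA.abs_eigenvalues_sub_le_frobenius_norm_sub hB hσA hσB i
  rwa [frobenius_norm_eq_sqrt_sum_sq] at h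
end

section
/- Let K be an N×N symmetric PSD kernel matrix with unit diagonal, Z ⊆ {1,...,N} of size M with K_Z invertible, λ_max the largest eigenvalue of K_Z. Suppose for every index i ∉ Z there exists j ∈ Z with |K_{ij}| ≥ ρ. Then tr(K_X - K_{XZ}K_Z^{-1}K_{ZX}) ≤ (N-M)(1 - ρ²/λ_max), where the blocks are with respect to the partition (Z, Zᶜ). -/
open Matrix


lemma inv_quadform_ge {M : ℕ} (KZ : Matrix (Fin M) (Fin M) ℝ) (hKZ : KZ.PosDef)
    (lmax : ℝ) (hl : 0 < lmax) (hmax : ∀ i, hKZ.1.eigenvalues i ≤ lmax)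
    (v : Fin M → ℝ) : v ⬝ᵥ v / lmax ≤ v ⬝ᵥ (KZ⁻¹ *ᵥ v) := by
  classical
  have hU := hKZ.1.eigenvectorUnitary
  set U : Matrix (Fin M) (Fin M) ℝ := (hKZ.1.eigenvectorUnitary : Matrix (Fin M) (Fin M) ℝ) with hUdef
  set μ : Fin M → ℝ := hKZ.1.eigenvalues with hμ
  have hμpos : ∀ i, 0 < μ i := hKZ.eigenvalues_pos
  have hUU : star U * U = 1 := (Unitary.mem_iff.mp hKZ.1.eigenvectorUnitary.2).1
  have hUU' : U * star U = 1 := (Unitary.mem_iff.mp hKZ.1.eigenvectorUnitary.2).2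
  have hspec : KZ = U * diagonal μ * star U := by
    have := hKZ.1.spectral_theorem
    simpa [hUdef, hμ] using this
  have hsUv : star U *ᵥ v = vecMul v U := by
    rw [star_eq_conjTranspose, conjTranspose_eq_transpose_of_trivial, mulVec_transpose]
  have hinv : KZ⁻¹ = U * diagonal (fun i => (μ i)⁻¹) * star U := by
    apply inv_eq_right_inv
    rw [hspec]
    calc U * diagonal μ * star U * (U * diagonal (fun i => (μ i)⁻¹) * star U)
        = U * diagonal μ * (star U * U) * diagonal (fun i => (μ i)⁻¹) * star U := by
          noncomm_ring
      _ = U * (diagonal μ * diagonal (fun i => (μ i)⁻¹)) * star U := by rw [hUU]; noncomm_ring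
      _ = 1 := by
          rw [diagonal_mul_diagonal]
          have : (fun i => μ i * (μ i)⁻¹) = fun _ => (1:ℝ) := by
            funext i; exact mul_inv_cancel₀ (hμpos i).ne'
          rw [this]; simp [hUU']
  have hquad : v ⬝ᵥ (KZ⁻¹ *ᵥ v) = ∑ i, (μ i)⁻¹ * ((v ᵥ* U) i)^2 := by
    rw [hinv, ← mulVec_mulVec, ← mulVec_mulVec, dotProduct_mulVec, hsUv]
    simp only [dotProduct, mulVec_diagonal]
    exact Finset.sum_congr rfl fun i _ => by ring
  have hnorm : v ⬝ᵥ v = ∑ i, ((v ᵥ* U) i)^2 := by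
    have h3 : (v ᵥ* U) ⬝ᵥ (v ᵥ* U) = v ⬝ᵥ v := by
      rw [← hsUv, dotProduct_mulVec, hsUv, vecMul_vecMul, hUU', vecMul_one]
    rw [← h3]; simp [dotProduct, sq]
  rw [hquad, hnorm, div_eq_mul_inv, Finset.sum_mul]
  apply Finset.sum_le_sum
  intro i _
  rw [mul_comm]
  exact mul_le_mul_of_nonneg_right (inv_anti₀ (hμpos i) (hmax i)) (sq_nonneg _)

/-- Trace bound for the Nyström residual: if `K = [[K_Z, K_ZX],[K_XZ, K_X]]` is a symmetric
PSD kernel matrix with unit diagonal, `K_Z` positive definite with largest eigenvalue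
`λ_max`, and every index outside `Z` is within kernel-distance `ρ` of some inducing index,
then `tr(K_X - K_XZ K_Z⁻¹ K_ZX) ≤ (N - M)(1 - ρ²/λ_max)`. -/
theorem trace_nystrom_residual_bound {M L : ℕ}
    (KZ : Matrix (Fin M) (Fin M) ℝ) (KZX : Matrix (Fin M) (Fin L) ℝ)
    (KX : Matrix (Fin L) (Fin L) ℝ)
    (hK : (Matrix.fromBlocks KZ KZX KZXᵀ KX).PosSemidef)
    (hdiagZ : ∀ i, KZ i i = 1) (hdiagX : ∀ i, KX i i = 1)
    (hKZ : KZ.PosDef) (lmax : ℝ) (hlmaxpos : 0 < lmax)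
    (hmax : ∀ i, hKZ.1.eigenvalues i ≤ lmax)
    (hattain : ∃ i, hKZ.1.eigenvalues i = lmax)
    (ρ : ℝ) (hρ0 : 0 < ρ) (hρ1 : ρ < 1)
    (hclose : ∀ i : Fin L, ∃ j : Fin M, ρ ≤ |KZX j i|) :
    (KX - KZXᵀ * KZ⁻¹ * KZX).trace ≤ (L : ℝ) * (1 - ρ ^ 2 / lmax) := by
  classical
  have key : ∀ i : Fin L, ρ ^ 2 / lmax ≤ (KZXᵀ * KZ⁻¹ * KZX) i i := by
    intro i
    set v : Fin M → ℝ := fun j => KZX j i with hv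
    have h1 : (KZXᵀ * KZ⁻¹ * KZX) i i = v ⬝ᵥ (KZ⁻¹ *ᵥ v) := by
      simp [Matrix.mul_apply, dotProduct, mulVec, transpose_apply, hv, Finset.mul_sum,
        Finset.sum_mul, dotProduct]
      rw [Finset.sum_comm]
      exact Finset.sum_congr rfl fun j _ => Finset.sum_congr rfl fun k _ => by ring
    have h2 : ρ ^ 2 ≤ v ⬝ᵥ v := by
      obtain ⟨j, hj⟩ := hclose i
      calc ρ ^ 2 ≤ (v j) ^ 2 := by
            rw [← sq_abs (v j)]
            exact pow_le_pow_left₀ hρ0.le hj 2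
        _ ≤ ∑ k, v k * v k := by
            rw [sq]
            exact Finset.single_le_sum (fun k _ => mul_self_nonneg (v k)) (Finset.mem_univ j)
        _ = v ⬝ᵥ v := rfl
    have h3 := inv_quadform_ge KZ hKZ lmax hlmaxpos hmax v
    rw [h1]
    calc ρ ^ 2 / lmax ≤ v ⬝ᵥ v / lmax := by gcongr
      _ ≤ v ⬝ᵥ (KZ⁻¹ *ᵥ v) := h3
  have : (KX - KZXᵀ * KZ⁻¹ * KZX).trace = ∑ i, (KX i i - (KZXᵀ * KZ⁻¹ * KZX) i i) := by
    simp [Matrix.trace, Matrix.diag]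
  rw [this]
  calc ∑ i, (KX i i - (KZXᵀ * KZ⁻¹ * KZX) i i)
      ≤ ∑ _i : Fin L, (1 - ρ ^ 2 / lmax) := by
        apply Finset.sum_le_sum
        intro i _
        rw [hdiagX i]
        linarith [key i]
    _ = (L : ℝ) * (1 - ρ ^ 2 / lmax) := by
        rw [Finset.sum_const, Finset.card_univ, Fintype.card_fin, nsmul_eq_mul]
end

section
/- Under the hypotheses of the trace bound (unit-diagonal PSD kernel matrix, every point within kernel-distance ρ of some inducing point, K_Z positive definite with unit diagonal and off-diagonal entries bounded by ρ), the Frobenius norm satisfies ||K_X - K_{XZ}K_Z^{-1}K_{ZX}||_F ≤ (N-M)(1 - ρ²/(1 + M(M-1)ρ)), provided λ_max(K_Z) ≥ 1. -/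
/-!
The residual `R = K_X - K_XZ K_Z⁻¹ K_ZX` is the Schur complement of `K_Z` in the positive
semidefinite kernel matrix, so it is positive semidefinite; then `R i j ^ 2 ≤ R i i * R j j` gives
`‖R‖_F ≤ tr R`. Each diagonal entry is `1 - vᵀ K_Z⁻¹ v` with `v` a column of `K_ZX`. The entry
bounds on `K_Z` give `xᵀ K_Z x ≤ (1 + (M-1)ρ) ‖x‖² ≤ (1 + M(M-1)ρ) ‖x‖²`, and Cauchy–Schwarz for
the form of `K_Z`, applied to `v` and `K_Z⁻¹ v`, turns this into
`vᵀ K_Z⁻¹ v ≥ ‖v‖² / (1 + M(M-1)ρ)`, while `‖v‖² ≥ ρ²` because some entry of `v` has modulus at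
least `ρ`.
-/

open Matrix Finset

namespace Matrix

theorem transpose_mul_mul_apply_self {m n : Type*} [Fintype m] (A : Matrix m m ℝ)
    (B : Matrix m n ℝ) (i : n) : (Bᵀ * A * B) i i = Bᵀ i ⬝ᵥ A *ᵥ Bᵀ i := by
  simp only [mul_apply, transpose_apply, dotProduct, mulVec, sum_mul, mul_sum]
  rw [sum_comm]
  exact sum_congr rfl fun j _ => sum_congr rfl fun k _ => by ring

variable {n : Type*} [Fintype n]

theorem PosSemidef.sq_dotProduct_mulVec_le {A : Matrix n n ℝ} (hA : A.PosSemidef)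
    (x y : n → ℝ) : (x ⬝ᵥ A *ᵥ y) ^ 2 ≤ (x ⬝ᵥ A *ᵥ x) * (y ⬝ᵥ A *ᵥ y) := by
  let _ := A.toSeminormedAddCommGroup hA
  let _ := A.toInnerProductSpace hA
  have inner_eq (u v : n → ℝ) : inner ℝ u v = u ⬝ᵥ A *ᵥ v := by
    change (A *ᵥ v) ⬝ᵥ star u = _
    rw [star_trivial, dotProduct_comm]
  simpa only [inner_eq, sq] using real_inner_mul_inner_self_le x y

theorem PosSemidef.sq_apply_le {A : Matrix n n ℝ} (hA : A.PosSemidef) (i j : n) :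
    A i j ^ 2 ≤ A i i * A j j := by
  classical
  have entry (k l : n) : A k l = Pi.single k 1 ⬝ᵥ A *ᵥ Pi.single l 1 := by
    simp [mulVec_single, single_dotProduct]
  simpa only [← entry] using hA.sq_dotProduct_mulVec_le (Pi.single i 1) (Pi.single j 1)

theorem PosSemidef.sqrt_sum_sq_apply_le_trace {A : Matrix n n ℝ} (hA : A.PosSemidef) :
    √(∑ i, ∑ j, A i j ^ 2) ≤ A.trace := by
  have h : ∑ i, ∑ j, A i j ^ 2 ≤ A.trace ^ 2 := calc
    ∑ i, ∑ j, A i j ^ 2 ≤ ∑ i, ∑ j, A i i * A j j :=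
      sum_le_sum fun i _ => sum_le_sum fun j _ => hA.sq_apply_le i j
    _ = A.trace ^ 2 := by rw [← sum_mul_sum, sq, trace]; rfl
  exact (Real.sqrt_le_left hA.trace_nonneg).mpr h

theorem dotProduct_mulVec_le_of_abs_apply_le {A : Matrix n n ℝ} {ρ : ℝ} (hρ : 0 ≤ ρ)
    (hdiag : ∀ i, A i i = 1) (hoff : ∀ i j, i ≠ j → |A i j| ≤ ρ) (x : n → ℝ) :
    x ⬝ᵥ A *ᵥ x ≤ (1 + (Fintype.card n - 1) * ρ) * (x ⬝ᵥ x) := by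
  classical
  have entry (i j : n) :
      x i * A i j * x j ≤ ρ * (|x i| * |x j|) + (1 - ρ) * (if i = j then x i * x j else 0) := by
    by_cases hij : i = j
    · subst hij
      rw [hdiag, if_pos rfl, abs_mul_abs_self]
      exact le_of_eq (by ring)
    · rw [if_neg hij]
      calc x i * A i j * x j ≤ |x i| * |A i j| * |x j| := by
            rw [← abs_mul, ← abs_mul]; exact le_abs_self _
        _ ≤ |x i| * ρ * |x j| := by gcongr; exact hoff i j hij
        _ = _ := by ring
  have hsq : (∑ i, |x i|) ^ 2 ≤ Fintype.card n * (x ⬝ᵥ x) := by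
    simpa [sq_abs, dotProduct, sq] using sq_sum_le_card_mul_sum_sq (s := univ) (f := fun i => |x i|)
  calc x ⬝ᵥ A *ᵥ x = ∑ i, ∑ j, x i * A i j * x j := by
        simp only [dotProduct, mulVec, mul_sum, mul_assoc]
    _ ≤ ∑ i, ∑ j, (ρ * (|x i| * |x j|) + (1 - ρ) * (if i = j then x i * x j else 0)) :=
        sum_le_sum fun i _ => sum_le_sum fun j _ => entry i j
    _ = ρ * (∑ i, |x i|) ^ 2 + (1 - ρ) * (x ⬝ᵥ x) := by
        simp only [sum_add_distrib, ← mul_sum, mul_ite, mul_zero, sum_ite_eq, mem_univ, if_true,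
          sq, sum_mul_sum, dotProduct]
    _ ≤ _ := by nlinarith [mul_le_mul_of_nonneg_left hsq hρ]

theorem PosDef.dotProduct_le_mul_dotProduct_inv_mulVec [DecidableEq n] {A : Matrix n n ℝ}
    (hA : A.PosDef) {c : ℝ} (hc : ∀ x, x ⬝ᵥ A *ᵥ x ≤ c * (x ⬝ᵥ x)) (v : n → ℝ) :
    v ⬝ᵥ v ≤ c * (v ⬝ᵥ A⁻¹ *ᵥ v) := by
  rcases eq_or_ne v 0 with rfl | hv
  · simp
  set w := A⁻¹ *ᵥ v
  have hAw : A *ᵥ w = v := by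
    rw [mulVec_mulVec, mul_nonsing_inv A ((isUnit_iff_isUnit_det A).mp hA.isUnit), one_mulVec]
  have hwv : w ⬝ᵥ A *ᵥ w = v ⬝ᵥ w := by rw [hAw, dotProduct_comm]
  have hvv : 0 < v ⬝ᵥ v :=
    (by simpa using dotProduct_star_self_nonneg v : 0 ≤ v ⬝ᵥ v).lt_of_ne'
      (dotProduct_self_eq_zero.not.mpr hv)
  have hcs := hA.posSemidef.sq_dotProduct_mulVec_le v w
  rw [hwv, hAw] at hcs
  have hw0 : 0 ≤ v ⬝ᵥ w := hwv ▸ hA.posSemidef.dotProduct_mulVec_nonneg w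
  nlinarith [mul_le_mul_of_nonneg_right (hc v) hw0]

theorem PosDef.sq_apply_div_le_transpose_mul_inv_mul_apply {m : Type*} [DecidableEq n]
    {A : Matrix n n ℝ} (hA : A.PosDef) {c : ℝ} (hc0 : 0 < c)
    (hc : ∀ x, x ⬝ᵥ A *ᵥ x ≤ c * (x ⬝ᵥ x)) (B : Matrix n m ℝ) (i : m) (j : n) :
    B j i ^ 2 / c ≤ (Bᵀ * A⁻¹ * B) i i := by
  have hcol : B j i ^ 2 ≤ Bᵀ i ⬝ᵥ Bᵀ i := by
    rw [sq]
    exact single_le_sum (f := fun k => B k i * B k i) (fun k _ => mul_self_nonneg _) (mem_univ j)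
  rw [transpose_mul_mul_apply_self, div_le_iff₀' hc0]
  exact hcol.trans (hA.dotProduct_le_mul_dotProduct_inv_mulVec hc (Bᵀ i))

end Matrix

theorem frobenius_nystrom_residual_bound_general {M L : ℕ}
    (ρ : ℝ) (hρ0 : 0 < ρ)
    (KZ : Matrix (Fin M) (Fin M) ℝ) (KZX : Matrix (Fin M) (Fin L) ℝ)
    (KX : Matrix (Fin L) (Fin L) ℝ)
    (hK : (Matrix.fromBlocks KZ KZX KZXᵀ KX).PosSemidef)
    (hdiagZ : ∀ i, KZ i i = 1) (hdiagX : ∀ i, KX i i = 1)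
    (hKZ : KZ.PosDef)
    (hoff : ∀ i j, i ≠ j → |KZ i j| ≤ ρ)
    (hclose : ∀ i : Fin L, ∃ j : Fin M, ρ ≤ |KZX j i|) :
    Real.sqrt (∑ i, ∑ j, ((KX - KZXᵀ * KZ⁻¹ * KZX) i j) ^ 2) ≤
      (L : ℝ) * (1 - ρ ^ 2 / (1 + M * (M - 1) * ρ)) := by
  set c : ℝ := 1 + M * (M - 1) * ρ
  have hM : (0 : ℝ) ≤ M * (M - 1) := by
    rcases M with _ | M
    · simp
    · rw [Nat.cast_succ, add_sub_cancel_right]; positivity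
  have hc : 0 < c := by have := mul_nonneg hM hρ0.le; linarith
  have hKZc (x : Fin M → ℝ) : x ⬝ᵥ KZ *ᵥ x ≤ c * (x ⬝ᵥ x) := by
    refine (dotProduct_mulVec_le_of_abs_apply_le hρ0.le hdiagZ hoff x).trans ?_
    refine mul_le_mul_of_nonneg_right ?_ (by simpa using dotProduct_star_self_nonneg x)
    rw [Fintype.card_fin]
    nlinarith [mul_nonneg (sq_nonneg ((M : ℝ) - 1)) hρ0.le]
  let _ : Invertible KZ := hKZ.isUnit.invertible
  have hR : (KX - KZXᵀ * KZ⁻¹ * KZX).PosSemidef := by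
    simpa using (hKZ.fromBlocks₁₁ KZX KX).mp (by simpa using hK)
  have hdiag (i : Fin L) : (KX - KZXᵀ * KZ⁻¹ * KZX) i i ≤ 1 - ρ ^ 2 / c := by
    obtain ⟨j, hj⟩ := hclose i
    have hρj : ρ ^ 2 / c ≤ KZX j i ^ 2 / c := by rw [← sq_abs (KZX j i)]; gcongr
    have := hKZ.sq_apply_div_le_transpose_mul_inv_mul_apply hc hKZc KZX i j
    rw [Matrix.sub_apply, hdiagX]
    linarith
  calc √(∑ i, ∑ j, (KX - KZXᵀ * KZ⁻¹ * KZX) i j ^ 2)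
      ≤ (KX - KZXᵀ * KZ⁻¹ * KZX).trace := hR.sqrt_sum_sq_apply_le_trace
    _ ≤ ∑ _i : Fin L, (1 - ρ ^ 2 / c) := sum_le_sum fun i _ => hdiag i
    _ = L * (1 - ρ ^ 2 / c) := by rw [sum_const, card_fin, nsmul_eq_mul]

/-- Frobenius-norm bound for the Nyström residual: under the hypotheses of the trace bound,
with `K_Z` unit-diagonal, off-diagonal entries bounded by `ρ`, and `λ_max(K_Z) ≥ 1`,
`‖K_X - K_XZ K_Z⁻¹ K_ZX‖_F ≤ (N - M)(1 - ρ²/(1 + M(M-1)ρ))`. -/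
theorem frobenius_nystrom_residual_bound {M L : ℕ}
    (ρ : ℝ) (hρ0 : 0 < ρ) (hρ1 : ρ < 1)
    (KZ : Matrix (Fin M) (Fin M) ℝ) (KZX : Matrix (Fin M) (Fin L) ℝ)
    (KX : Matrix (Fin L) (Fin L) ℝ)
    (hK : (Matrix.fromBlocks KZ KZX KZXᵀ KX).PosSemidef)
    (hdiagZ : ∀ i, KZ i i = 1) (hdiagX : ∀ i, KX i i = 1)
    (hKZ : KZ.PosDef)
    (hoff : ∀ i j, i ≠ j → |KZ i j| ≤ ρ)
    (hlmax : ∃ i, 1 ≤ hKZ.1.eigenvalues i)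
    (hclose : ∀ i : Fin L, ∃ j : Fin M, ρ ≤ |KZX j i|) :
    Real.sqrt (∑ i, ∑ j, ((KX - KZXᵀ * KZ⁻¹ * KZX) i j) ^ 2) ≤
      (L : ℝ) * (1 - ρ ^ 2 / (1 + M * (M - 1) * ρ)) :=
  frobenius_nystrom_residual_bound_general ρ hρ0 KZ KZX KX hK hdiagZ hdiagX hKZ hoff hclose
end
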